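/- arXiv:2002.07255 — 4 statements merged into one kernel-verified Lean document; each statement's English description precedes it below -/
import Mathlib

section
/- Let f₀ : ℝ → ℝ be a probability density that is symmetric about 0, continuously differentiable with f₀'(x) ≤ 0 for x > 0, and suppose θ f₀'(θ) → 0 as θ → ∞. Define g₀(θ) = -2θ f₀'(θ) for θ > 0. Then g₀ ≥ 0 and for all x ∈ ℝ, f₀(x) = ∫₀^∞ (2θ)⁻¹ 1_{[-θ,θ]}(x) g₀(θ) dθ. -/
open MeasureTheory Set Filter

/-- Feller representation: a smooth symmetric unimodal probability density `f₀`
is a mixture of symmetric uniform densities with mixing density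
`g₀ θ = -2 θ f₀'(θ)`. -/
theorem stmt_3 (f₀ f₀' : ℝ → ℝ)
    (hderiv : ∀ x : ℝ, HasDerivAt f₀ (f₀' x) x)
    (hcont : Continuous f₀')
    (hnonneg : ∀ x : ℝ, 0 ≤ f₀ x)
    (hdensity : ∫ x : ℝ, f₀ x = 1)
    (hsymm : ∀ x : ℝ, f₀ (-x) = f₀ x)
    (hmono : ∀ x : ℝ, 0 < x → f₀' x ≤ 0)
    (htail : Tendsto (fun θ : ℝ => θ * f₀' θ) atTop (nhds 0))
    (hf₀tail : Tendsto f₀ atTop (nhds 0))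
    (hint : IntegrableOn (fun θ : ℝ => θ * f₀' θ) (Set.Ioi (0:ℝ))) :
    (∀ θ : ℝ, 0 < θ → 0 ≤ -2 * θ * f₀' θ) ∧
    (∀ x : ℝ, f₀ x =
      ∫ θ in Set.Ioi (0:ℝ),
        (Set.Icc (-θ) θ).indicator (fun _ => (2*θ)⁻¹) x * (-2 * θ * f₀' θ)) := by
  constructor
  · intro θ hθ
    have := hmono θ hθ
    nlinarith
  · -- integrability of f₀' on Ioi a for a ≥ 0
    have hInt : ∀ a : ℝ, 0 ≤ a → IntegrableOn f₀' (Ioi a) := by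
      intro a ha
      have h1 : IntegrableOn f₀' (Ioc a (a + 1)) := hcont.integrableOn_Ioc
      have h2 : IntegrableOn f₀' (Ioi (a + 1)) := by
        refine Integrable.mono (hint.mono_set (fun θ hθ => ?_))
          hcont.aestronglyMeasurable.restrict ?_
        · have : a + 1 < θ := hθ
          exact mem_Ioi.mpr (by linarith)
        · filter_upwards [ae_restrict_mem measurableSet_Ioi] with θ hθ
          have h1θ : 1 ≤ θ := by have := mem_Ioi.mp hθ; linarith
          have : ‖f₀' θ‖ ≤ ‖θ‖ * ‖f₀' θ‖ :=
            le_mul_of_one_le_left (norm_nonneg _) (by rw [Real.norm_eq_abs]; exact le_trans h1θ (le_abs_self θ))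
          simpa [norm_mul] using this
      have hsub : Ioi a ⊆ Ioc a (a + 1) ∪ Ioi (a + 1) := by
        intro θ hθ
        by_cases h : θ ≤ a + 1
        · exact Or.inl ⟨hθ, h⟩
        · exact Or.inr (mem_Ioi.mpr (lt_of_not_ge h))
      exact (h1.union h2).mono_set hsub
    -- FTC on (a, ∞)
    have hFTC : ∀ a : ℝ, 0 ≤ a → ∫ θ in Ioi a, -f₀' θ = f₀ a := by
      intro a ha
      have := integral_Ioi_of_hasDerivAt_of_tendsto (f := f₀) (f' := f₀') (a := a)
        ((hderiv a).continuousAt.continuousWithinAt)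
        (fun x _ => hderiv x) (hInt a ha) hf₀tail
      rw [integral_neg, this]
      ring
    intro x
    set a := |x| with ha
    have ha0 : 0 ≤ a := abs_nonneg x
    have heq : EqOn
        (fun θ : ℝ => (Set.Icc (-θ) θ).indicator (fun _ => (2*θ)⁻¹) x * (-2 * θ * f₀' θ))
        ((Ici a).indicator (fun θ => -f₀' θ)) (Ioi (0:ℝ)) := by
      intro θ hθ
      have hθ' : (0:ℝ) < θ := hθ
      by_cases h : a ≤ θ
      · have hx : x ∈ Icc (-θ) θ := by
          rw [mem_Icc, ← abs_le]; exact h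
        simp only [indicator_of_mem hx, indicator_of_mem (mem_Ici.mpr h)]
        field_simp
      · have hx : x ∉ Icc (-θ) θ := by
          rw [mem_Icc, ← abs_le]; exact h
        simp [indicator_of_notMem hx, indicator_of_notMem (fun hh => h (mem_Ici.mp hh))]
    rw [setIntegral_congr_fun measurableSet_Ioi heq,
      setIntegral_indicator measurableSet_Ici]
    have hset : (Ioi (0:ℝ) ∩ Ici a : Set ℝ) =ᵐ[volume] Ioi a := by
      rcases eq_or_lt_of_le ha0 with h | h
      · rw [← h, Set.inter_eq_left.mpr Ioi_subset_Ici_self]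
        exact Filter.EventuallyEq.rfl
      · have h' : Ioi (0:ℝ) ∩ Ici a = Ici a :=
          Set.inter_eq_right.mpr (fun θ hθ => lt_of_lt_of_le h hθ)
        rw [h']
        exact Ioi_ae_eq_Ici.symm
    rw [setIntegral_congr_set hset, hFTC a ha0]
    rcases le_or_gt 0 x with hx | hx
    · rw [ha, abs_of_nonneg hx]
    · rw [ha, abs_of_neg hx, hsymm]
end

section
/- Let g₀ be a probability density on (0,∞) satisfying ∫_x^∞ θ⁴ g₀(θ) dθ ≤ C(1+x)^{-ρ+2} for all x ≥ 0, with ρ > 2 and C > 0. Let X have density f₀(x) = ∫₀^∞ (2θ)⁻¹ 1_{[-θ,θ]}(x) g₀(θ) dθ. Then there exists C' > 0 such that for all sufficiently large t, E[X⁴ 1_{|X| > t}] ≤ C' t^{-ρ+2}. -/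
open MeasureTheory Set
open scoped ENNReal

private lemma ofReal_int_le {μ : Measure ℝ} {h : ℝ → ℝ} (hm : AEStronglyMeasurable h μ)
    (hnn : 0 ≤ᵐ[μ] h) :
    ENNReal.ofReal (∫ a, h a ∂μ) ≤ ∫⁻ a, ENNReal.ofReal (h a) ∂μ := by
  rw [integral_eq_lintegral_of_nonneg_ae hnn hm]
  exact ENNReal.ofReal_toReal_le

private lemma measF0 (g₀ : ℝ → ℝ) (hg : Measurable g₀) :
    Measurable (fun p : ℝ × ℝ =>
      (Icc (-p.2) p.2).indicator (fun _ => (2*p.2)⁻¹) p.1 * g₀ p.2) := by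
  have h1 : (fun p : ℝ × ℝ => (Icc (-p.2) p.2).indicator (fun _ => (2*p.2)⁻¹) p.1)
      = ({p : ℝ × ℝ | |p.1| ≤ p.2}.indicator (fun p => (2*p.2)⁻¹)) := by
    funext p
    simp only [Set.indicator_apply, Set.mem_Icc, Set.mem_setOf_eq, ← abs_le]
  have hset : MeasurableSet {p : ℝ × ℝ | |p.1| ≤ p.2} :=
    measurableSet_le measurable_fst.abs measurable_snd
  have hind : Measurable (fun p : ℝ × ℝ => (Icc (-p.2) p.2).indicator (fun _ => (2*p.2)⁻¹) p.1) := by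
    rw [h1]
    exact Measurable.indicator ((measurable_snd.const_mul 2).inv) hset
  exact hind.mul (hg.comp measurable_snd)

set_option maxHeartbeats 1000000 in
/-- Polynomial tail decay of the fourth-moment tail transfers from the mixing
density `g₀` to the mixed density `f₀`: if `∫_x^∞ θ⁴ g₀ ≤ C (1+x)^{-ρ+2}` then
`E[X⁴ 1_{|X|>t}] ≤ C' t^{-ρ+2}` for all large `t`. -/
theorem stmt_7 (g₀ : ℝ → ℝ) (C ρ : ℝ) (hC : 0 < C) (hρ : 2 < ρ)
    (hg₀m : Measurable g₀) (hg₀nn : ∀ θ ∈ Set.Ioi (0:ℝ), 0 ≤ g₀ θ)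
    (hg₀d : ∫ θ in Set.Ioi (0:ℝ), g₀ θ = 1)
    (htail : ∀ x : ℝ, 0 ≤ x →
      ∫ θ in Set.Ioi x, θ^4 * g₀ θ ≤ C * (1 + x) ^ (-ρ + 2))
    (f₀ : ℝ → ℝ)
    (hf₀ : ∀ x : ℝ, f₀ x =
      ∫ θ in Set.Ioi (0:ℝ), (Set.Icc (-θ) θ).indicator (fun _ => (2*θ)⁻¹) x * g₀ θ) :
    ∃ C' > 0, ∃ T : ℝ, ∀ t ≥ T,
      ∫ x in {x : ℝ | t < |x|}, x^4 * f₀ x ≤ C' * t ^ (-ρ + 2) := by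
  -- notation
  set K : ℝ → ℝ → ℝ≥0∞ := fun x θ =>
    ENNReal.ofReal (x^4 * ((Icc (-θ) θ).indicator (fun _ => (2*θ)⁻¹) x * g₀ θ)) with hK
  have hF0j : Measurable (fun p : ℝ × ℝ =>
      (Icc (-p.2) p.2).indicator (fun _ => (2*p.2)⁻¹) p.1 * g₀ p.2) := measF0 g₀ hg₀m
  have hFj : Measurable (fun p : ℝ × ℝ =>
      p.1^4 * ((Icc (-p.2) p.2).indicator (fun _ => (2*p.2)⁻¹) p.1 * g₀ p.2)) :=
    (measurable_fst.pow_const 4).mul hF0j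
  have hKj : Measurable (Function.uncurry K) := ENNReal.measurable_ofReal.comp hFj
  have hFx : ∀ x : ℝ, Measurable (fun θ =>
      x^4 * ((Icc (-θ) θ).indicator (fun _ => (2*θ)⁻¹) x * g₀ θ)) :=
    fun x => hFj.comp measurable_prodMk_left
  have hF0x : ∀ x : ℝ, Measurable (fun θ =>
      (Icc (-θ) θ).indicator (fun _ => (2*θ)⁻¹) x * g₀ θ) :=
    fun x => hF0j.comp measurable_prodMk_left
  have hKx : ∀ θ : ℝ, Measurable (fun x => K x θ) :=
    fun θ => hKj.comp (measurable_id.prodMk measurable_const)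
  have hf₀meas : Measurable f₀ := by
    have h : f₀ = fun x => ∫ θ in Ioi (0:ℝ),
        (fun p : ℝ × ℝ => (Icc (-p.2) p.2).indicator (fun _ => (2*p.2)⁻¹) p.1 * g₀ p.2) (x, θ) :=
      funext hf₀
    rw [h]
    exact (hF0j.stronglyMeasurable.integral_prod_right').measurable
  have hf₀nn : ∀ x, 0 ≤ f₀ x := by
    intro x
    rw [hf₀ x]
    refine setIntegral_nonneg measurableSet_Ioi fun θ hθ => ?_
    have hθ0 : (0:ℝ) < θ := hθ
    exact mul_nonneg (Set.indicator_nonneg (fun _ _ => by positivity) _) (hg₀nn θ hθ)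
  have hg4m : Measurable (fun θ : ℝ => θ^4 * g₀ θ) := (measurable_id.pow_const 4).mul hg₀m
  have hgint : IntegrableOn g₀ (Ioi (0:ℝ)) := by
    by_contra h
    rw [integral_undef h] at hg₀d
    norm_num at hg₀d
  have hS : ∀ t : ℝ, MeasurableSet {x : ℝ | t < |x|} :=
    fun t => measurableSet_lt measurable_const measurable_abs
  -- Claim 1
  have claim1 : ∀ x : ℝ, ENNReal.ofReal (x^4 * f₀ x) ≤ ∫⁻ θ in Ioi (0:ℝ), K x θ := by
    intro x
    rw [hf₀ x, ← integral_const_mul]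
    refine ofReal_int_le (hFx x).aestronglyMeasurable ?_
    refine (ae_restrict_iff' measurableSet_Ioi).2 (Filter.Eventually.of_forall fun θ hθ => ?_)
    have hθ0 : (0:ℝ) < θ := hθ
    exact mul_nonneg (by positivity)
      (mul_nonneg (Set.indicator_nonneg (fun _ _ => by positivity) _) (hg₀nn θ hθ))
  -- Claim 3 : inner upper bound
  have hinner_up : ∀ t : ℝ, 0 < t → ∀ θ ∈ Ioi (0:ℝ),
      ∫⁻ x in {x : ℝ | t < |x|}, K x θ
        ≤ ENNReal.ofReal (θ^4 * g₀ θ) * (Ioi t).indicator 1 θ := by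
    intro t ht θ hθ
    have hθ0 : (0:ℝ) < θ := hθ
    by_cases hc : θ ≤ t
    · have h0 : ∀ x ∈ {x : ℝ | t < |x|}, K x θ = 0 := by
        intro x hx
        have hx' : t < |x| := hx
        have : x ∉ Icc (-θ) θ := by
          rw [mem_Icc, ← abs_le]
          linarith
        simp [hK, Set.indicator_of_notMem this]
      have hz : ∫⁻ x in {x : ℝ | t < |x|}, K x θ = 0 := by
        refine le_antisymm ?_ zero_le
        calc ∫⁻ x in {x : ℝ | t < |x|}, K x θ
            ≤ ∫⁻ _x in {x : ℝ | t < |x|}, 0 :=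
              setLIntegral_mono measurable_const (fun x hx => le_of_eq (h0 x hx))
          _ = 0 := by simp
      rw [hz]
      exact zero_le
    · push_neg at hc
      rw [Set.indicator_of_mem (mem_Ioi.2 hc), Pi.one_apply, mul_one]
      have hnn : (0:ℝ) ≤ (2*θ)⁻¹ * g₀ θ :=
        mul_nonneg (by positivity) (hg₀nn θ hθ)
      calc ∫⁻ x in {x : ℝ | t < |x|}, K x θ
          ≤ ∫⁻ x in {x : ℝ | t < |x|},
              (Icc (-θ) θ).indicator (fun _ => ENNReal.ofReal (θ^4 * ((2*θ)⁻¹ * g₀ θ))) x := by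
            refine setLIntegral_mono (measurable_const.indicator measurableSet_Icc) ?_
            intro x _
            by_cases hm : x ∈ Icc (-θ) θ
            · rw [Set.indicator_of_mem hm]
              simp only [hK, Set.indicator_of_mem hm]
              refine ENNReal.ofReal_le_ofReal (mul_le_mul_of_nonneg_right ?_ hnn)
              have hxa : |x| ≤ θ := abs_le.mpr ⟨(mem_Icc.1 hm).1, (mem_Icc.1 hm).2⟩
              calc x^4 = |x|^4 := by
                    rw [← abs_pow, abs_of_nonneg (by positivity)]
                _ ≤ θ^4 := pow_le_pow_left₀ (abs_nonneg x) hxa 4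
            · rw [Set.indicator_of_notMem hm]
              simp [hK, Set.indicator_of_notMem hm]
        _ ≤ ∫⁻ x, (Icc (-θ) θ).indicator
              (fun _ => ENNReal.ofReal (θ^4 * ((2*θ)⁻¹ * g₀ θ))) x := setLIntegral_le_lintegral _ _
        _ = ENNReal.ofReal (θ^4 * ((2*θ)⁻¹ * g₀ θ)) * volume (Icc (-θ) θ) := by
            rw [lintegral_indicator measurableSet_Icc, setLIntegral_const]
        _ = ENNReal.ofReal (θ^4 * g₀ θ) := by
            rw [Real.volume_Icc, ← ENNReal.ofReal_mul (by positivity)]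
            have hne : (2*θ) ≠ 0 := by positivity
            congr 1
            have he : θ - -θ = 2*θ := by ring
            rw [he]
            calc θ^4 * ((2*θ)⁻¹ * g₀ θ) * (2*θ) = θ^4 * g₀ θ * ((2*θ)⁻¹ * (2*θ)) := by ring
              _ = θ^4 * g₀ θ := by rw [inv_mul_cancel₀ hne, mul_one]
  -- Claim 4 : collapse indicator
  have hcollapse : ∀ t : ℝ, 0 ≤ t →
      ∫⁻ θ in Ioi (0:ℝ), ENNReal.ofReal (θ^4 * g₀ θ) * (Ioi t).indicator 1 θ
        = ∫⁻ θ in Ioi t, ENNReal.ofReal (θ^4 * g₀ θ) := by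
    intro t ht
    have h : (fun θ => ENNReal.ofReal (θ^4 * g₀ θ) * (Ioi t).indicator 1 θ)
        = (Ioi t).indicator (fun θ => ENNReal.ofReal (θ^4 * g₀ θ)) := by
      funext θ
      by_cases h : θ ∈ Ioi t <;> simp [Set.indicator_apply, h]
    rw [h, lintegral_indicator measurableSet_Ioi,
      Measure.restrict_restrict measurableSet_Ioi, Ioi_inter_Ioi, sup_eq_left.mpr ht]
  by_cases hcase : ∃ x₀ : ℝ, 0 ≤ x₀ ∧ IntegrableOn (fun θ => θ^4 * g₀ θ) (Ioi x₀)
  · -- tail of θ⁴g₀ is integrable: genuine bound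
    obtain ⟨x₀, hx₀0, hx₀int⟩ := hcase
    refine ⟨C, hC, max x₀ 1, fun t ht => ?_⟩
    have ht1 : (1:ℝ) ≤ t := le_trans (le_max_right _ _) ht
    have ht0 : (0:ℝ) < t := lt_of_lt_of_le one_pos ht1
    have htx₀ : x₀ ≤ t := le_trans (le_max_left _ _) ht
    have hint_t : IntegrableOn (fun θ => θ^4 * g₀ θ) (Ioi t) :=
      hx₀int.mono_set (Ioi_subset_Ioi htx₀)
    have hnn_t : 0 ≤ᵐ[volume.restrict (Ioi t)] fun θ => θ^4 * g₀ θ :=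
      (ae_restrict_iff' measurableSet_Ioi).2 (Filter.Eventually.of_forall fun θ hθ =>
        mul_nonneg (by positivity) (hg₀nn θ (mem_Ioi.2 (ht0.trans hθ))))
    rw [integral_eq_lintegral_of_nonneg_ae (f := fun x : ℝ => x^4 * f₀ x)
      (ae_restrict_of_ae (Filter.Eventually.of_forall fun x =>
        mul_nonneg (by positivity) (hf₀nn x)))
      (((measurable_id.pow_const 4).mul hf₀meas).aestronglyMeasurable)]
    refine ENNReal.toReal_le_of_le_ofReal (by positivity) ?_
    calc ∫⁻ x in {x : ℝ | t < |x|}, ENNReal.ofReal (x^4 * f₀ x)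
        ≤ ∫⁻ x in {x : ℝ | t < |x|}, ∫⁻ θ in Ioi (0:ℝ), K x θ :=
          lintegral_mono fun x => claim1 x
      _ = ∫⁻ θ in Ioi (0:ℝ), ∫⁻ x in {x : ℝ | t < |x|}, K x θ :=
          lintegral_lintegral_swap hKj.aemeasurable
      _ ≤ ∫⁻ θ in Ioi (0:ℝ), ENNReal.ofReal (θ^4 * g₀ θ) * (Ioi t).indicator 1 θ :=
          lintegral_mono_ae ((ae_restrict_iff' measurableSet_Ioi).2
            (Filter.Eventually.of_forall (hinner_up t ht0)))
      _ = ∫⁻ θ in Ioi t, ENNReal.ofReal (θ^4 * g₀ θ) := hcollapse t ht0.le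
      _ = ENNReal.ofReal (∫ θ in Ioi t, θ^4 * g₀ θ) :=
          (ofReal_integral_eq_lintegral_ofReal hint_t hnn_t).symm
      _ ≤ ENNReal.ofReal (C * (1+t)^(-ρ+2)) := ENNReal.ofReal_le_ofReal (htail t ht0.le)
      _ ≤ ENNReal.ofReal (C * t^(-ρ+2)) :=
          ENNReal.ofReal_le_ofReal (mul_le_mul_of_nonneg_left
            (Real.rpow_le_rpow_of_nonpos ht0 (by linarith) (by linarith)) hC.le)
  · -- tail never integrable: the LHS integral is not defined (equals 0)
    push_neg at hcase
    refine ⟨1, one_pos, 1, fun t ht => ?_⟩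
    have ht0 : (0:ℝ) < t := lt_of_lt_of_le one_pos ht
    -- pointwise identity for |x| ≥ 1
    have heq : ∀ x : ℝ, 1 ≤ |x| →
        ENNReal.ofReal (x^4 * f₀ x) = ∫⁻ θ in Ioi (0:ℝ), K x θ := by
      intro x hx
      have hint : IntegrableOn
          (fun θ => (Icc (-θ) θ).indicator (fun _ => (2*θ)⁻¹) x * g₀ θ) (Ioi (0:ℝ)) := by
        refine Integrable.mono' (hgint.const_mul (1/2)) (hF0x x).aestronglyMeasurable ?_
        refine (ae_restrict_iff' measurableSet_Ioi).2 (Filter.Eventually.of_forall fun θ hθ => ?_)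
        have hθ0 : (0:ℝ) < θ := hθ
        by_cases hm : x ∈ Icc (-θ) θ
        · rw [Set.indicator_of_mem hm]
          have hxθ : (1:ℝ) ≤ θ :=
            le_trans hx (abs_le.mpr ⟨(mem_Icc.1 hm).1, (mem_Icc.1 hm).2⟩)
          rw [Real.norm_eq_abs,
            abs_of_nonneg (mul_nonneg (by positivity) (hg₀nn θ hθ))]
          refine mul_le_mul_of_nonneg_right ?_ (hg₀nn θ hθ)
          calc (2*θ)⁻¹ ≤ 2⁻¹ := by
                apply inv_anti₀ two_pos
                linarith
            _ = 1/2 := by norm_num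
        · rw [Set.indicator_of_notMem hm]
          simp only [zero_mul, norm_zero]
          have := hg₀nn θ hθ
          linarith
      rw [hf₀ x, ← integral_const_mul]
      refine ofReal_integral_eq_lintegral_ofReal (hint.const_mul _) ?_
      refine (ae_restrict_iff' measurableSet_Ioi).2 (Filter.Eventually.of_forall fun θ hθ => ?_)
      have hθ0 : (0:ℝ) < θ := hθ
      exact mul_nonneg (by positivity)
        (mul_nonneg (Set.indicator_nonneg (fun _ _ => by positivity) _) (hg₀nn θ hθ))
    -- lower bound for the inner integral when θ > 2t
    have innerlow : ∀ θ ∈ Ioi (2*t),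
        ENNReal.ofReal (θ^4 * g₀ θ * (1/64)) ≤ ∫⁻ x in {x : ℝ | t < |x|}, K x θ := by
      intro θ hθ
      have h2t : 2*t < θ := hθ
      have hθ0 : (0:ℝ) < θ := by linarith
      have hgnn : 0 ≤ g₀ θ := hg₀nn θ (mem_Ioi.2 hθ0)
      have hsub : Ioc (θ/2) θ ⊆ {x : ℝ | t < |x|} := by
        intro x hx
        have h1 : θ/2 < x := hx.1
        simp only [mem_setOf_eq]
        rw [abs_of_pos (by linarith)]
        linarith
      have hne : (2*θ) ≠ 0 := by positivity
      calc ENNReal.ofReal (θ^4 * g₀ θ * (1/64))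
          = ENNReal.ofReal ((θ/2)^4 * ((2*θ)⁻¹ * g₀ θ)) * volume (Ioc (θ/2) θ) := by
            rw [Real.volume_Ioc, ← ENNReal.ofReal_mul (by positivity)]
            congr 1
            have he : θ - θ/2 = θ/2 := by ring
            rw [he]
            calc θ^4 * g₀ θ * (1/64)
                = θ^4 * g₀ θ * (1/16) * ((2*θ)⁻¹ * (2*θ)) * (1/4) := by
                  rw [inv_mul_cancel₀ hne]; ring
              _ = (θ/2)^4 * ((2*θ)⁻¹ * g₀ θ) * (θ/2) := by ring
        _ = ∫⁻ _x in Ioc (θ/2) θ, ENNReal.ofReal ((θ/2)^4 * ((2*θ)⁻¹ * g₀ θ)) :=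
            (setLIntegral_const _ _).symm
        _ ≤ ∫⁻ x in Ioc (θ/2) θ, K x θ := by
            refine setLIntegral_mono (hKx θ) ?_
            intro x hx
            have hxm : x ∈ Icc (-θ) θ := mem_Icc.2 ⟨by linarith [hx.1], hx.2⟩
            simp only [hK, Set.indicator_of_mem hxm]
            refine ENNReal.ofReal_le_ofReal (mul_le_mul_of_nonneg_right ?_
              (mul_nonneg (by positivity) hgnn))
            exact pow_le_pow_left₀ (by linarith) (le_of_lt hx.1) 4
        _ ≤ ∫⁻ x in {x : ℝ | t < |x|}, K x θ := lintegral_mono_set hsub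
    -- the set lintegral is infinite
    have hlint : ∫⁻ x in {x : ℝ | t < |x|}, ENNReal.ofReal (x^4 * f₀ x) = ⊤ := by
      have e1 : ∫⁻ x in {x : ℝ | t < |x|}, ENNReal.ofReal (x^4 * f₀ x)
          = ∫⁻ x in {x : ℝ | t < |x|}, ∫⁻ θ in Ioi (0:ℝ), K x θ := by
        refine lintegral_congr_ae ((ae_restrict_iff' (hS t)).2
          (Filter.Eventually.of_forall fun x hx => ?_))
        exact heq x (le_trans ht (le_of_lt hx))
      have hnn2t : 0 ≤ᵐ[volume.restrict (Ioi (2*t))] fun θ => θ^4 * g₀ θ :=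
        (ae_restrict_iff' measurableSet_Ioi).2 (Filter.Eventually.of_forall fun θ hθ =>
          mul_nonneg (by positivity) (hg₀nn θ (mem_Ioi.2 (by linarith [mem_Ioi.1 hθ]))))
      have hni := hcase (2*t) (by linarith)
      have hfi : ¬ HasFiniteIntegral (fun θ => θ^4 * g₀ θ) (volume.restrict (Ioi (2*t))) :=
        fun h => hni ⟨hg4m.aestronglyMeasurable, h⟩
      rw [hasFiniteIntegral_iff_ofReal hnn2t] at hfi
      have htop : ∫⁻ θ in Ioi (2*t), ENNReal.ofReal (θ^4 * g₀ θ) = ⊤ :=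
        eq_top_iff.2 (not_lt.1 hfi)
      have htop' : ∫⁻ θ in Ioi (2*t), ENNReal.ofReal (θ^4 * g₀ θ * (1/64)) = ⊤ := by
        have : (fun θ => ENNReal.ofReal (θ^4 * g₀ θ * (1/64)))
            = fun θ => ENNReal.ofReal (θ^4 * g₀ θ) * ENNReal.ofReal (1/64) := by
          funext θ
          rw [ENNReal.ofReal_mul' (by norm_num)]
        have hm4 : Measurable fun θ : ℝ => ENNReal.ofReal (θ^4 * g₀ θ) := by
          exact ENNReal.measurable_ofReal.comp hg4m
        rw [this, lintegral_mul_const (f := fun θ : ℝ => ENNReal.ofReal (θ^4 * g₀ θ)) _ hm4,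
          htop, ENNReal.top_mul (by simp)]
      rw [e1, lintegral_lintegral_swap hKj.aemeasurable]
      refine top_le_iff.1 ?_
      calc (⊤ : ℝ≥0∞) = ∫⁻ θ in Ioi (2*t), ENNReal.ofReal (θ^4 * g₀ θ * (1/64)) := htop'.symm
        _ ≤ ∫⁻ θ in Ioi (2*t), ∫⁻ x in {x : ℝ | t < |x|}, K x θ :=
            lintegral_mono_ae ((ae_restrict_iff' measurableSet_Ioi).2
              (Filter.Eventually.of_forall innerlow))
        _ ≤ ∫⁻ θ in Ioi (0:ℝ), ∫⁻ x in {x : ℝ | t < |x|}, K x θ :=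
            lintegral_mono_set (Ioi_subset_Ioi (by linarith))
    have hnotint : ¬ IntegrableOn (fun x => x^4 * f₀ x) {x : ℝ | t < |x|} := by
      intro h
      have h2 := h.2
      rw [hasFiniteIntegral_iff_ofReal
        (ae_restrict_of_ae (Filter.Eventually.of_forall fun x =>
          mul_nonneg (by positivity) (hf₀nn x)))] at h2
      rw [hlint] at h2
      exact lt_irrefl _ h2
    rw [integral_undef hnotint]
    positivity
end

section
/- For every δ ∈ (0,1) there exists c(δ) > 0 such that for all sufficiently large z > 0 and all u with 0 < u < 1 - δ, one has z^z e^{-z/u} / (Γ(z) u^z) ≤ exp(-c(δ) z / u). -/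
open Real MeasureTheory Set

lemma gamma_lb (z : ℝ) (hz : 1 ≤ z) :
    z ^ (z - 1) * Real.exp (-(z + 1)) ≤ Real.Gamma z := by
  have hz0 : 0 < z := by linarith
  rw [Real.Gamma_eq_integral hz0]
  have hsub : Set.Ioc z (z + 1) ⊆ Set.Ioi (0:ℝ) := fun x hx => lt_of_lt_of_le hz0 (le_of_lt hx.1)
  have hint : IntegrableOn (fun x : ℝ => Real.exp (-x) * x ^ (z - 1)) (Set.Ioc z (z+1)) :=
    (Real.GammaIntegral_convergent hz0).mono_set hsub
  have h1 : (∫ x in Set.Ioc z (z+1), Real.exp (-x) * x ^ (z - 1)) ≤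
      ∫ x in Set.Ioi 0, Real.exp (-x) * x ^ (z - 1) := by
    apply setIntegral_mono_set (Real.GammaIntegral_convergent hz0)
    · filter_upwards [self_mem_ae_restrict measurableSet_Ioi] with x hx
      have hx0 : 0 < x := hx
      positivity
    · exact HasSubset.Subset.eventuallyLE hsub
  refine le_trans ?_ h1
  have h2 : z ^ (z - 1) * Real.exp (-(z + 1)) =
      ∫ _x in Set.Ioc z (z+1), z ^ (z - 1) * Real.exp (-(z + 1)) := by
    rw [setIntegral_const, Real.volume_real_Ioc]
    simp
  rw [h2]
  apply setIntegral_mono_on (integrableOn_const (by simp [Real.volume_Ioc])) hint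
    measurableSet_Ioc
  intro x hx
  have hx1 : z ≤ x := le_of_lt hx.1
  have hx0 : 0 < x := lt_of_lt_of_le hz0 hx1
  have hx2 : x ≤ z + 1 := hx.2
  have e1 : Real.exp (-(z+1)) ≤ Real.exp (-x) := Real.exp_le_exp.2 (by linarith)
  have e2 : z ^ (z - 1) ≤ x ^ (z - 1) :=
    Real.rpow_le_rpow (le_of_lt hz0) hx1 (by linarith)
  calc z ^ (z - 1) * Real.exp (-(z + 1)) ≤ x ^ (z - 1) * Real.exp (-x) := by
        apply mul_le_mul e2 e1 (Real.exp_pos _).le (by positivity)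
    _ = Real.exp (-x) * x ^ (z - 1) := mul_comm _ _

/-- Gamma tail estimate (Lemma A.1): for every `δ ∈ (0,1)` there is `c(δ) > 0`
such that for all large `z` and all `0 < u < 1 - δ`,
`z^z e^{-z/u} / (Γ(z) u^z) ≤ e^{-c(δ) z / u}`. -/
theorem stmt_9 :
    ∀ δ : ℝ, δ ∈ Set.Ioo (0:ℝ) 1 →
      ∃ c > 0, ∃ Z : ℝ, ∀ z ≥ Z, ∀ u : ℝ, 0 < u → u < 1 - δ →
        z ^ z * Real.exp (-z/u) / (Real.Gamma z * u ^ z) ≤ Real.exp (-c * z / u) := by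
  rintro δ ⟨hδ0, hδ1⟩
  set a : ℝ := 1 - δ with ha
  have ha0 : 0 < a := by rw [ha]; linarith
  have ha1 : a < 1 := by rw [ha]; linarith
  have hloga : Real.log a < 0 := Real.log_neg ha0 ha1
  set κ : ℝ := δ + a * Real.log a with hκdef
  have hκ0 : 0 < κ := by
    have h := Real.log_lt_sub_one_of_pos (x := 1/a) (by positivity) (by
      intro h
      have : a = 1 := by field_simp at h; linarith
      linarith)
    rw [Real.log_div one_ne_zero (ne_of_gt ha0), Real.log_one] at h
    have : -Real.log a < 1/a - 1 := by linarith
    have h2 : a * (-Real.log a) < a * (1/a - 1) := by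
      exact (mul_lt_mul_iff_right₀ ha0).2 this
    have h3 : a * (1/a - 1) = 1 - a := by field_simp
    rw [h3] at h2
    have hda : δ = 1 - a := by rw [ha]; ring
    rw [hκdef, hda]; linarith
  have hκa : 1 - κ = a * (1 - Real.log a) := by
    have hda : δ = 1 - a := by rw [ha]; ring
    rw [hκdef, hda]; ring
  clear_value a κ
  refine ⟨κ/2, by positivity, max 1 (36/κ^2), ?_⟩
  intro z hz u hu0 hu1
  have hz1 : (1:ℝ) ≤ z := le_trans (le_max_left _ _) hz
  have hz0 : 0 < z := by linarith
  have hzκ : 36/κ^2 ≤ z := le_trans (le_max_right _ _) hz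
  have hua : u < a := hu1
  -- key pointwise inequality : (1-κ)/u + log u ≥ 1
  have hkey : 1 ≤ (1 - κ)/u + Real.log u := by
    have hau : 1 ≤ a / u := (one_le_div hu0).2 hua.le
    have hlog : Real.log (a / u) ≤ a / u - 1 :=
      Real.log_le_sub_one_of_pos (by positivity)
    rw [Real.log_div (ne_of_gt ha0) (ne_of_gt hu0)] at hlog
    have hrw : (1 - κ)/u = (a/u) * (1 - Real.log a) := by
      rw [hκa]; ring
    rw [hrw]
    nlinarith [mul_nonneg (sub_nonneg.2 hau) (neg_nonneg.2 hloga.le)]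
  -- bound on log z : log z + 1 ≤ (κ/2) * z
  have hlogz : Real.log z + 1 ≤ (κ/2) * z := by
    have hs0 : (0:ℝ) < Real.sqrt z := Real.sqrt_pos.2 hz0
    have hsq : Real.sqrt z * Real.sqrt z = z := Real.mul_self_sqrt hz0.le
    have hs1 : (1:ℝ) ≤ Real.sqrt z := by
      nlinarith [hs0]
    have hlogs : Real.log (Real.sqrt z) ≤ Real.sqrt z - 1 :=
      Real.log_le_sub_one_of_pos hs0
    have hlz : Real.log z = 2 * Real.log (Real.sqrt z) := by
      conv_lhs => rw [← hsq]
      rw [Real.log_mul (ne_of_gt hs0) (ne_of_gt hs0)]; ring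
    have hsz : 6/κ ≤ Real.sqrt z := by
      rw [Real.le_sqrt (by positivity) hz0.le, div_pow]
      calc (6:ℝ)^2 / κ^2 = 36 / κ^2 := by norm_num
        _ ≤ z := hzκ
    have h6 : 6 * Real.sqrt z ≤ κ * z := by
      have := (div_le_iff₀ hκ0).1 hsz
      calc 6 * Real.sqrt z ≤ (Real.sqrt z * κ) * Real.sqrt z := by nlinarith
        _ = κ * (Real.sqrt z * Real.sqrt z) := by ring
        _ = κ * z := by rw [hsq]
    nlinarith
  -- lower bound for Gamma
  have hΓlb := gamma_lb z hz1
  have hΓpos : 0 < Real.Gamma z := Real.Gamma_pos_of_pos hz0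
  have hloglb : (z - 1) * Real.log z - (z + 1) ≤ Real.log (Real.Gamma z) := by
    have h := Real.log_le_log (by positivity) hΓlb
    rwa [Real.log_mul (by positivity) (ne_of_gt (Real.exp_pos _)), Real.log_rpow hz0,
      Real.log_exp] at h
  -- convert goal to logs
  have hLpos : 0 < z ^ z * Real.exp (-z/u) / (Real.Gamma z * u ^ z) := by positivity
  rw [← Real.exp_log hLpos, Real.exp_le_exp]
  have hlogL : Real.log (z ^ z * Real.exp (-z/u) / (Real.Gamma z * u ^ z)) =
      z * Real.log z + (-z/u) - (Real.log (Real.Gamma z) + z * Real.log u) := by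
    rw [Real.log_div (by positivity) (by positivity), Real.log_mul (by positivity)
      (ne_of_gt (Real.exp_pos _)), Real.log_mul (ne_of_gt hΓpos) (by positivity),
      Real.log_rpow hz0, Real.log_rpow hu0, Real.log_exp]
  rw [hlogL, neg_div]
  -- now pure arithmetic over the atom w = z / u
  have hzu : z * 1 ≤ z * ((1 - κ)/u + Real.log u) :=
    mul_le_mul_of_nonneg_left hkey hz0.le
  have hexp2 : z * ((1 - κ)/u + Real.log u) = z/u - κ*(z/u) + z * Real.log u := by
    field_simp
  have hzu2 : z ≤ z/u - κ*(z/u) + z * Real.log u := by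
    rw [hexp2] at hzu; linarith
  have hzw : z ≤ z/u := by
    rw [le_div_iff₀ hu0]
    nlinarith [mul_le_mul_of_nonneg_left (le_of_lt (lt_trans hua ha1)) hz0.le]
  have hκzw : κ * z ≤ κ * (z/u) := mul_le_mul_of_nonneg_left hzw hκ0.le
  have hG : z * Real.log z - Real.log z - (z+1) ≤ Real.log (Real.Gamma z) := by
    have hr : (z - 1) * Real.log z - (z + 1)
        = z * Real.log z - Real.log z - (z+1) := by ring
    linarith [hloglb, hr.le, hr.ge]
  have hg : -(κ/2) * z / u = -(κ * (z/u))/2 := by ring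
  rw [hg]
  set w := z / u with hw
  linarith [hzu2, hκzw, hG, hlogz]
end

section
/- Let g be a probability density on (0,∞) of the form g(θ) = ∫ Ga(θ | z, z/μ) dG(μ) for a probability measure G on (0,∞) with G((E,∞)) ≤ ε, where Ga(·|z, z/μ) is the Gamma density with shape z and rate z/μ. Suppose z is large enough that the Gamma tail bound z^z e^{-z/u}/(Γ(z)u^z) ≤ e^{-c z/u} holds for u ≤ 1/2 with constant c = c(1/2) > 0. Then ∫_{2E}^∞ g(θ) dθ ≤ z⁻¹ e^{-2cz} + ε. -/
open MeasureTheory Set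

set_option maxHeartbeats 1000000

/-- The Gamma density with shape `α` and rate `β`, supported on `(0, ∞)`. -/
noncomputable def gammaDens (α β θ : ℝ) : ℝ :=
  if 0 < θ then β ^ α * θ ^ (α - 1) * Real.exp (-β * θ) / Real.Gamma α else 0

lemma gammaDens_nonneg {α β : ℝ} (hα : 0 < α) (hβ : 0 < β) (θ : ℝ) :
    0 ≤ gammaDens α β θ := by
  unfold gammaDens
  split_ifs with h
  · have hΓ := Real.Gamma_pos_of_pos hα
    positivity
  · exact le_refl 0

lemma gammaDens_ofReal_le_gammaPDF (α β θ : ℝ) :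
    ENNReal.ofReal (gammaDens α β θ) ≤ ProbabilityTheory.gammaPDF α β θ := by
  unfold gammaDens
  rw [ProbabilityTheory.gammaPDF_eq]
  split_ifs with h h2 h3
  · exact ENNReal.ofReal_le_ofReal (le_of_eq (by rw [neg_mul]; ring))
  · exact absurd h.le h2
  · exact (ENNReal.ofReal_zero).le.trans zero_le
  · exact le_refl _

lemma gammaDens_measurable_pair (z : ℝ) :
    Measurable (fun p : ℝ × ℝ => gammaDens z (z / p.2) p.1) := by
  unfold gammaDens
  refine Measurable.ite (measurableSet_lt measurable_const measurable_fst) ?_ measurable_const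
  refine Measurable.div ?_ measurable_const
  exact (((measurable_const.div measurable_snd).pow_const z).mul
      (measurable_fst.pow_const (z - 1))).mul
      (((measurable_const.div measurable_snd).neg.mul measurable_fst).exp)

lemma aux_exp_integral {A l : ℝ} (hl : 0 < l) :
    ∫ θ in Set.Ioi A, Real.exp (-(l * θ)) = l⁻¹ * Real.exp (-(l * A)) := by
  have h := integral_comp_mul_left_Ioi (fun x => Real.exp (-x)) A hl
  simp only [smul_eq_mul] at h
  rw [h, integral_exp_neg_Ioi]

lemma aux_exp_integrableOn (A : ℝ) {l : ℝ} (hl : 0 < l) :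
    IntegrableOn (fun θ => Real.exp (-(l * θ))) (Set.Ioi A) := by
  simpa [neg_mul] using exp_neg_integrableOn_Ioi A hl

/-- Tail bound for a Gamma location-mixture (Lemma A.2): if the mixing measure
`G` puts mass at most `ε` beyond `E` and the Gamma tail estimate holds, then
`∫_{2E}^∞ g(θ) dθ ≤ z⁻¹ e^{-2cz} + ε` for `g(θ) = ∫ Ga(θ | z, z/μ) dG(μ)`. -/
theorem stmt_19 (z c E ε : ℝ) (hz : 1 ≤ z) (hc : 0 < c) (hE : 0 < E) (hε : 0 ≤ ε)
    (hgamma_tail : ∀ u : ℝ, 0 < u → u ≤ 1/2 →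
      z ^ z * Real.exp (-z / u) / (Real.Gamma z * u ^ z) ≤ Real.exp (-c * z / u))
    (G : Measure ℝ) [IsProbabilityMeasure G]
    (hGsupp : G (Set.Iic (0:ℝ)) = 0)
    (hGtail : (G (Set.Ioi E)).toReal ≤ ε)
    (g : ℝ → ℝ) (hg : ∀ θ : ℝ, g θ = ∫ μ' : ℝ, gammaDens z (z / μ') θ ∂G) :
    ∫ θ in Set.Ioi (2 * E), g θ ≤ z⁻¹ * Real.exp (-2 * c * z) + ε := by
  have hz0 : (0:ℝ) < z := by linarith
  have hΓ : 0 < Real.Gamma z := Real.Gamma_pos_of_pos hz0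
  set A := 2 * E with hA
  have hA0 : (0:ℝ) < A := by rw [hA]; positivity
  set K := z⁻¹ * Real.exp (-2 * c * z) with hK
  have hK0 : 0 ≤ K := by rw [hK]; positivity
  -- a.e. positivity of the mixing variable
  have hae_pos : ∀ᵐ μ' ∂G, 0 < μ' := by
    rw [ae_iff]
    have hset : {μ' : ℝ | ¬ 0 < μ'} = Set.Iic 0 := by ext x; simp [not_lt]
    rw [hset]; exact hGsupp
  -- the inner tail integral is at most 1 for every positive μ'
  have hone : ∀ μ' : ℝ, 0 < μ' →
      (∫⁻ θ in Set.Ioi A, ENNReal.ofReal (gammaDens z (z / μ') θ)) ≤ 1 := by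
    intro μ' hμ'
    calc (∫⁻ θ in Set.Ioi A, ENNReal.ofReal (gammaDens z (z / μ') θ))
        ≤ ∫⁻ θ, ENNReal.ofReal (gammaDens z (z / μ') θ) := setLIntegral_le_lintegral _ _
      _ ≤ ∫⁻ θ, ProbabilityTheory.gammaPDF z (z / μ') θ :=
          lintegral_mono fun θ => gammaDens_ofReal_le_gammaPDF _ _ _
      _ = 1 := ProbabilityTheory.lintegral_gammaPDF_eq_one hz0 (div_pos hz0 hμ')
  -- the core bound for μ' ∈ (0, E]
  have hcore : ∀ μ ∈ Set.Ioc (0:ℝ) E,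
      (∫⁻ θ in Set.Ioi A, ENNReal.ofReal (gammaDens z (z / μ) θ)) ≤ ENNReal.ofReal K := by
    intro μ hμ
    obtain ⟨hμ0, hμE⟩ := hμ
    set l := z / (2 * μ) with hl
    have hl0 : 0 < l := by rw [hl]; positivity
    set β := z / μ with hβ
    have hβ0 : 0 < β := by rw [hβ]; positivity
    set D := β ^ z * A ^ (z - 1) * Real.exp (-β * A) / Real.Gamma z with hD
    have hD0 : 0 ≤ D := by rw [hD]; positivity
    have hβl : β = 2 * l := by rw [hβ, hl]; field_simp
    -- pointwise bound on (A, ∞)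
    have hpt : ∀ θ ∈ Set.Ioi A, ENNReal.ofReal (gammaDens z β θ) ≤
        ENNReal.ofReal ((D * Real.exp (l * A)) * Real.exp (-(l * θ))) := by
      intro θ hθ
      have hθA : A < θ := hθ
      have hθ0 : 0 < θ := lt_trans hA0 hθA
      apply ENNReal.ofReal_le_ofReal
      rw [gammaDens, if_pos hθ0]
      have hlog : Real.log θ - Real.log A ≤ (θ - A) / A := by
        have h1 : Real.log (θ / A) ≤ θ / A - 1 := Real.log_le_sub_one_of_pos (by positivity)
        rw [Real.log_div (ne_of_gt hθ0) (ne_of_gt hA0)] at h1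
        have h2 : θ / A - 1 = (θ - A) / A := by field_simp
        linarith
      have hfrac : (z - 1) / A ≤ l := by
        rw [hl, hA, div_le_div_iff₀ hA0 (by positivity : (0:ℝ) < 2 * μ)]
        nlinarith
      have hmain : (z - 1) * (Real.log θ - Real.log A) ≤ l * (θ - A) := by
        have h1 : (z - 1) * (Real.log θ - Real.log A) ≤ (z - 1) * ((θ - A) / A) :=
          mul_le_mul_of_nonneg_left hlog (by linarith)
        have h2 : (z - 1) * ((θ - A) / A) = ((z - 1) / A) * (θ - A) := by ring
        have h3 : ((z - 1) / A) * (θ - A) ≤ l * (θ - A) :=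
          mul_le_mul_of_nonneg_right hfrac (by linarith)
        linarith
      have key : θ ^ (z - 1) * Real.exp (-β * θ) ≤
          A ^ (z - 1) * Real.exp (-β * A) * (Real.exp (l * A) * Real.exp (-(l * θ))) := by
        rw [Real.rpow_def_of_pos hθ0, Real.rpow_def_of_pos hA0, ← Real.exp_add, ← Real.exp_add,
          ← Real.exp_add, ← Real.exp_add]
        apply Real.exp_le_exp.mpr
        have e1 : β * θ = 2 * (l * θ) := by rw [hβl]; ring
        have e2 : β * A = 2 * (l * A) := by rw [hβl]; ring
        linarith [hmain, e1, e2]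
      calc β ^ z * θ ^ (z - 1) * Real.exp (-β * θ) / Real.Gamma z
          = (β ^ z / Real.Gamma z) * (θ ^ (z - 1) * Real.exp (-β * θ)) := by ring
        _ ≤ (β ^ z / Real.Gamma z) *
            (A ^ (z - 1) * Real.exp (-β * A) * (Real.exp (l * A) * Real.exp (-(l * θ)))) := by
            apply mul_le_mul_of_nonneg_left key (by positivity)
        _ = (D * Real.exp (l * A)) * Real.exp (-(l * θ)) := by rw [hD]; ring
    -- tail hypothesis at u = μ / A
    have hu0 : 0 < μ / A := by positivity
    have hu2 : μ / A ≤ 1 / 2 := by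
      rw [div_le_div_iff₀ hA0 (by norm_num : (0:ℝ) < 2), hA]; linarith
    have ht := hgamma_tail (μ / A) hu0 hu2
    have h5 : z / (μ / A) = β * A := by rw [hβ]; field_simp
    have hu2' : ((μ / A) : ℝ) ^ z ≠ 0 := (Real.rpow_pos_of_pos hu0 z).ne'
    have h6 : (z:ℝ) ^ z / (μ / A) ^ z = (β * A) ^ z := by
      rw [← Real.div_rpow hz0.le hu0.le, h5]
    have h8 : A ^ (z - 1) * A = A ^ z := by
      rw [← Real.rpow_add_one hA0.ne' (z - 1)]; norm_num
    have h7 : (β * A) ^ z = β ^ z * (A ^ (z - 1) * A) := by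
      rw [Real.mul_rpow hβ0.le hA0.le, h8]
    have h9 : (z:ℝ) ^ z = β ^ z * (A ^ (z - 1) * A) * (μ / A) ^ z := by
      rw [← h7, ← h6, div_mul_cancel₀ _ hu2']
    have eexp : Real.exp (-z / (μ / A)) = Real.exp (-β * A) := by
      rw [neg_div, h5, neg_mul]
    have ht' : D * A ≤ Real.exp (-c * (β * A)) := by
      have e1 : z ^ z * Real.exp (-z / (μ / A)) / (Real.Gamma z * (μ / A) ^ z) = D * A := by
        rw [eexp, h9, hD]
        field_simp
      have e2 : -c * z / (μ / A) = -c * (β * A) := by rw [mul_div_assoc, h5]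
      rw [← e1, ← e2]; exact ht
    -- conclude
    have hlinv : l⁻¹ = 2 * μ / z := by rw [hl, inv_div]
    have hexpAB : Real.exp (-c * (β * A)) ≤ Real.exp (-2 * c * z) := by
      apply Real.exp_le_exp.mpr
      have hβA : 2 * z ≤ β * A := by
        rw [hβ, hA, div_mul_eq_mul_div, le_div_iff₀ hμ0]; nlinarith
      nlinarith
    have hDK : D * Real.exp (l * A) * (l⁻¹ * Real.exp (-(l * A))) ≤ K := by
      have hexp1 : Real.exp (l * A) * Real.exp (-(l * A)) = 1 := by
        rw [← Real.exp_add]; simp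
      have e3 : D * Real.exp (l * A) * (l⁻¹ * Real.exp (-(l * A))) =
          D * l⁻¹ * (Real.exp (l * A) * Real.exp (-(l * A))) := by ring
      rw [e3, hexp1, mul_one]
      have hDle : D ≤ Real.exp (-c * (β * A)) / A := by
        rw [le_div_iff₀ hA0]; exact ht'
      have step : D * l⁻¹ ≤ (Real.exp (-c * (β * A)) / A) * (2 * μ / z) := by
        rw [hlinv]
        apply mul_le_mul_of_nonneg_right hDle (by positivity)
      have e4 : (Real.exp (-c * (β * A)) / A) * (2 * μ / z) =
          (Real.exp (-c * (β * A)) * (2 * μ / A)) * z⁻¹ := by ring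
      have hμA : 2 * μ / A ≤ 1 := by
        rw [div_le_one hA0, hA]; linarith
      have step2 : (Real.exp (-c * (β * A)) * (2 * μ / A)) * z⁻¹ ≤
          (Real.exp (-2 * c * z) * 1) * z⁻¹ := by
        apply mul_le_mul_of_nonneg_right _ (by positivity)
        exact mul_le_mul hexpAB hμA (by positivity) (Real.exp_nonneg _)
      rw [hK]
      calc D * l⁻¹ ≤ (Real.exp (-c * (β * A)) / A) * (2 * μ / z) := step
        _ = (Real.exp (-c * (β * A)) * (2 * μ / A)) * z⁻¹ := e4
        _ ≤ (Real.exp (-2 * c * z) * 1) * z⁻¹ := step2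
        _ = z⁻¹ * Real.exp (-2 * c * z) := by ring
    calc (∫⁻ θ in Set.Ioi A, ENNReal.ofReal (gammaDens z (z / μ) θ))
        ≤ ∫⁻ θ in Set.Ioi A,
            ENNReal.ofReal ((D * Real.exp (l * A)) * Real.exp (-(l * θ))) := by
          apply setLIntegral_mono
            (((measurable_id'.const_mul l).neg.exp.const_mul _).ennreal_ofReal)
          intro θ hθ
          exact hpt θ hθ
      _ = ENNReal.ofReal (∫ θ in Set.Ioi A, (D * Real.exp (l * A)) * Real.exp (-(l * θ))) := by
          rw [ofReal_integral_eq_lintegral_ofReal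
            ((aux_exp_integrableOn A hl0).const_mul _)
            (ae_of_all _ fun θ => by positivity)]
      _ = ENNReal.ofReal ((D * Real.exp (l * A)) * (l⁻¹ * Real.exp (-(l * A)))) := by
          rw [integral_const_mul, aux_exp_integral hl0]
      _ ≤ ENNReal.ofReal K := ENNReal.ofReal_le_ofReal hDK
  -- pointwise domination of g by the lintegral
  have step1 : ∀ θ : ℝ, ENNReal.ofReal (g θ) ≤
      ∫⁻ μ', ENNReal.ofReal (gammaDens z (z / μ') θ) ∂G := by
    intro θ
    rw [hg θ]
    by_cases hi : Integrable (fun μ' => gammaDens z (z / μ') θ) G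
    · exact le_of_eq (ofReal_integral_eq_lintegral_ofReal hi
        (hae_pos.mono fun μ' h => gammaDens_nonneg hz0 (div_pos hz0 h) θ))
    · rw [integral_undef hi]; simp
  -- Tonelli and assembly
  have step2 : (∫⁻ θ in Set.Ioi A, ENNReal.ofReal (g θ)) ≤ ENNReal.ofReal (K + ε) := by
    calc (∫⁻ θ in Set.Ioi A, ENNReal.ofReal (g θ))
        ≤ ∫⁻ θ in Set.Ioi A, ∫⁻ μ', ENNReal.ofReal (gammaDens z (z / μ') θ) ∂G :=
          lintegral_mono fun θ => step1 θ
      _ = ∫⁻ μ', (∫⁻ θ in Set.Ioi A, ENNReal.ofReal (gammaDens z (z / μ') θ)) ∂G := by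
          exact lintegral_lintegral_swap (μ := volume.restrict (Set.Ioi A)) (ν := G)
            (f := fun θ μ' => ENNReal.ofReal (gammaDens z (z / μ') θ))
            ((gammaDens_measurable_pair z).ennreal_ofReal).aemeasurable
      _ ≤ ∫⁻ μ', (ENNReal.ofReal K + (Set.Ioi E).indicator (fun _ => 1) μ') ∂G := by
          refine lintegral_mono_ae
            (f := fun μ' => ∫⁻ θ in Set.Ioi A, ENNReal.ofReal (gammaDens z (z / μ') θ))
            (g := fun μ' => ENNReal.ofReal K + (Set.Ioi E).indicator (fun _ => 1) μ') ?_
          filter_upwards [hae_pos] with μ' hμ'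
          rcases le_or_gt μ' E with hle | hlt
          · exact le_trans (hcore μ' ⟨hμ', hle⟩) le_self_add
          · refine le_trans (hone μ' hμ') ?_
            rw [Set.indicator_of_mem (Set.mem_Ioi.mpr hlt)]
            exact le_add_self
      _ = ENNReal.ofReal K * G Set.univ + G (Set.Ioi E) := by
          rw [lintegral_add_left measurable_const, lintegral_const,
            lintegral_indicator measurableSet_Ioi, setLIntegral_one]
      _ ≤ ENNReal.ofReal K + ENNReal.ofReal ε := by
          rw [measure_univ, mul_one]
          exact add_le_add_right
            ((ENNReal.le_ofReal_iff_toReal_le (measure_ne_top G _) hε).mpr hGtail) _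
      _ = ENNReal.ofReal (K + ε) := (ENNReal.ofReal_add hK0 hε).symm
  have hgnn : ∀ θ, 0 ≤ g θ := fun θ => by
    rw [hg]
    exact integral_nonneg_of_ae (hae_pos.mono fun μ' h => gammaDens_nonneg hz0 (div_pos hz0 h) θ)
  by_cases hint : IntegrableOn g (Set.Ioi A)
  · rw [integral_eq_lintegral_of_nonneg_ae (ae_of_all _ hgnn) hint.aestronglyMeasurable]
    calc (∫⁻ θ in Set.Ioi A, ENNReal.ofReal (g θ)).toReal
        ≤ (ENNReal.ofReal (K + ε)).toReal :=
          ENNReal.toReal_mono ENNReal.ofReal_ne_top step2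
      _ = K + ε := ENNReal.toReal_ofReal (by positivity)
  · rw [integral_undef hint]
    positivity
end
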